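/- Compatibility condition (S₂): for every integer n ≥ 0 and every z ∈ ℂ with nonzero imaginary part, 1 + (z − α_n)(B_{n+1}(z) − B_n(z)) = β_{n+1} A_{n+1}(z) − β_n A_{n−1}(z) (using the conventions B_0(z) = 0 and β_0 A_{−1}(z) = 0 when n = 0). -/

import Mathlib

/-!
Write `J_z(p) = ∫ p(y) w(y) / ((z - y)(y - t)) dy`. Splitting `z - α_n = (z - y) + (y - α_n)`
and using the three-term recurrence `(y - α_n) P_n = P_{n+1} + β_n P_{n-1}` gives
`(z - α_n) J_z(q P_n) = ∫ q P_n w / (y - t) + J_z(q P_{n+1}) + β_n J_z(q P_{n-1})`.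
Taking `q = P_{n+1}` and `q = P_{n-1}` and subtracting, the `J_z(P_{n+1} P_{n-1})` terms cancel
and (S₂) reduces to the value of `r_{n+1} = (γ / h_n) ∫ P_{n+1} P_n w / (y - t)`. Off `y = t`
the weight satisfies `w' = (t - 2y + γ / (y - t)) w`, so integrating `(P_{n+1} P_n w)'` over `ℝ`
(it is continuous at `t`, where `w` vanishes, and decays at infinity) gives
`r_{n+1} = 2 β_{n+1} - (n + 1)`.
-/

open MeasureTheory Polynomial
open Real Set Filter Topology

theorem integral_eq_zero_of_hasDerivAt_of_ne {E : Type*} [NormedAddCommGroup E]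
    [NormedSpace ℝ E] [CompleteSpace E] {f f' : ℝ → E} {a : ℝ} (hcont : ContinuousAt f a)
    (hderiv : ∀ x ≠ a, HasDerivAt f (f' x) x) (hf' : Integrable f') (hf : Integrable f) :
    ∫ x, f' x = 0 := by
  have hbot : Tendsto f atBot (𝓝 0) :=
    tendsto_zero_of_hasDerivAt_of_integrableOn_Iic (a := a - 1)
      (fun x hx => hderiv x (by linarith [mem_Iic.1 hx])) hf'.integrableOn hf.integrableOn
  have htop : Tendsto f atTop (𝓝 0) :=
    tendsto_zero_of_hasDerivAt_of_integrableOn_Ioi (a := a)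
      (fun x hx => hderiv x (mem_Ioi.1 hx).ne') hf'.integrableOn hf.integrableOn
  rw [← intervalIntegral.integral_Iic_add_Ioi hf'.integrableOn hf'.integrableOn,
    integral_Iic_of_hasDerivAt_of_tendsto hcont.continuousWithinAt
      (fun x hx => hderiv x (mem_Iio.1 hx).ne) hf'.integrableOn hbot,
    integral_Ioi_of_hasDerivAt_of_tendsto hcont.continuousWithinAt
      (fun x hx => hderiv x (mem_Ioi.1 hx).ne') hf'.integrableOn htop]
  abel

lemma integrable_abs_rpow_mul_exp_neg_mul_sq {b s : ℝ} (hb : 0 < b) (hs : -1 < s) :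
    Integrable fun x : ℝ => |x| ^ s * exp (-b * x ^ 2) := by
  have hIoi : IntegrableOn (fun x : ℝ => |x| ^ s * exp (-b * x ^ 2)) (Ioi 0) :=
    (integrableOn_rpow_mul_exp_neg_mul_sq hb hs).congr_fun
      (fun x hx => by simp only [abs_of_pos (mem_Ioi.1 hx)]) measurableSet_Ioi
  rw [← integrableOn_univ, ← Iio_union_Ici (a := (0 : ℝ)), integrableOn_union,
    integrableOn_Ici_iff_integrableOn_Ioi,
    ← (Measure.measurePreserving_neg volume).integrableOn_comp_preimage
      (Homeomorph.neg ℝ).measurableEmbedding]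
  simpa [Function.comp_def] using And.intro hIoi hIoi

lemma integrable_eval_mul_abs_rpow_mul_exp_neg_mul_sq {b s : ℝ} (hb : 0 < b) (hs : -1 < s)
    (q : ℝ[X]) : Integrable fun x : ℝ => q.eval x * (|x| ^ s * exp (-b * x ^ 2)) := by
  induction q using Polynomial.induction_on' with
  | add p q hp hq =>
    exact (hp.add hq).congr (.of_forall fun x => by simp only [Pi.add_apply, eval_add, add_mul])
  | monomial n c =>
    simp only [eval_monomial, mul_assoc]
    refine Integrable.const_mul ?_ c
    refine (integrable_abs_rpow_mul_exp_neg_mul_sq hb (s := n + s)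
      (by linarith [n.cast_nonneg (α := ℝ)])).mono' (by fun_prop) ?_
    filter_upwards [Measure.ae_ne volume 0] with x hx
    rw [norm_mul, norm_mul, norm_pow, Real.norm_eq_abs, Real.norm_of_nonneg (by positivity),
      Real.norm_of_nonneg (by positivity), Real.rpow_add (abs_pos.2 hx), Real.rpow_natCast,
      mul_assoc]

lemma integrable_eval_mul_exp_mul_abs_rpow (t : ℝ) {s : ℝ} (hs : -1 < s) (p : ℝ[X]) :
    Integrable fun y : ℝ => p.eval y * (exp (-y ^ 2 + t * y) * |y - t| ^ s) := by
  suffices h : Integrable fun x : ℝ =>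
      p.eval (x + t) * (exp (-(x + t) ^ 2 + t * (x + t)) * |x| ^ s) by
    simpa using h.comp_sub_right t
  refine ((integrable_eval_mul_abs_rpow_mul_exp_neg_mul_sq (b := 1 / 2) (by norm_num) hs
    (p.comp (X + C t))).norm.const_mul (exp (t ^ 2 / 2))).mono' (by fun_prop)
    (.of_forall fun x => ?_)
  have hexp : exp (-(x + t) ^ 2 + t * (x + t)) ≤ exp (t ^ 2 / 2) * exp (-(1 / 2) * x ^ 2) := by
    rw [← exp_add]
    exact exp_le_exp.2 (by nlinarith [sq_nonneg (x + t)])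
  simp only [norm_mul, eval_comp, eval_add, eval_X, eval_C, Real.norm_eq_abs, abs_exp,
    abs_of_nonneg (Real.rpow_nonneg (abs_nonneg x) s)]
  calc |p.eval (x + t)| * (exp (-(x + t) ^ 2 + t * (x + t)) * |x| ^ s)
      ≤ |p.eval (x + t)| * (exp (t ^ 2 / 2) * exp (-(1 / 2) * x ^ 2) * |x| ^ s) := by gcongr
    _ = exp (t ^ 2 / 2) * (|p.eval (x + t)| * (|x| ^ s * exp (-(1 / 2) * x ^ 2))) := by ring

lemma integrable_eval_mul_of_abs_le_exp_mul_abs_rpow {t s C : ℝ} (hs : -1 < s) {u : ℝ → ℝ}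
    (hu : AEStronglyMeasurable u)
    (hbound : ∀ y, |u y| ≤ C * (exp (-y ^ 2 + t * y) * |y - t| ^ s)) (p : ℝ[X]) :
    Integrable fun y : ℝ => p.eval y * u y := by
  refine ((integrable_eval_mul_exp_mul_abs_rpow t hs p).norm.const_mul C).mono'
    (p.continuous.aestronglyMeasurable.mul hu) (.of_forall fun y => ?_)
  rw [norm_mul, norm_mul, Real.norm_eq_abs, Real.norm_eq_abs, Real.norm_eq_abs, abs_of_nonneg
    (by positivity : 0 ≤ exp (-y ^ 2 + t * y) * |y - t| ^ s), mul_left_comm]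
  exact mul_le_mul_of_nonneg_left (hbound y) (abs_nonneg _)

noncomputable def gaussJumpWeight (t γ A B y : ℝ) : ℝ :=
  exp (-y ^ 2 + t * y) * |y - t| ^ γ * (A + B * (if 0 < y - t then (1 : ℝ) else 0))

section GaussJumpWeight

variable {t γ A B : ℝ}

lemma abs_gaussJumpWeight_le (y : ℝ) :
    |gaussJumpWeight t γ A B y| ≤ (|A| + |B|) * (exp (-y ^ 2 + t * y) * |y - t| ^ γ) := by
  have hjump : |A + B * (if 0 < y - t then (1 : ℝ) else 0)| ≤ |A| + |B| := by
    split_ifs <;> simp [abs_add_le]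
  rw [gaussJumpWeight, abs_mul, abs_mul, abs_exp, abs_of_nonneg (by positivity), mul_comm]
  gcongr

lemma measurable_gaussJumpWeight : Measurable (gaussJumpWeight t γ A B) := by
  unfold gaussJumpWeight
  refine Measurable.mul (by fun_prop) (measurable_const.add (measurable_const.mul ?_))
  exact Measurable.ite (measurableSet_lt measurable_const (by fun_prop)) measurable_const
    measurable_const

lemma gaussJumpWeight_self (hγ : 0 < γ) : gaussJumpWeight t γ A B t = 0 := by
  simp [gaussJumpWeight, zero_rpow hγ.ne']

lemma continuousAt_gaussJumpWeight_self (hγ : 0 < γ) :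
    ContinuousAt (gaussJumpWeight t γ A B) t := by
  have henv : Continuous fun y => (|A| + |B|) * (exp (-y ^ 2 + t * y) * |y - t| ^ γ) := by
    fun_prop (disch := exact hγ.le)
  rw [ContinuousAt, gaussJumpWeight_self hγ]
  refine squeeze_zero_norm (fun y => abs_gaussJumpWeight_le y) ?_
  simpa [zero_rpow hγ.ne'] using henv.tendsto t

lemma hasDerivAt_abs_sub_rpow {y : ℝ} (hy : y ≠ t) :
    HasDerivAt (fun x => |x - t| ^ γ) (γ * |y - t| ^ γ / (y - t)) y := by
  have hyt : y - t ≠ 0 := sub_ne_zero.2 hy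
  have habs : HasDerivAt (fun x => |x - t|) (SignType.sign (y - t) : ℝ) y := by
    exact ((hasDerivAt_abs hyt).comp y ((hasDerivAt_id' y).sub_const t)).congr_deriv (mul_one _)
  convert habs.rpow_const (p := γ) (Or.inl (abs_ne_zero.2 hyt)) using 1
  rw [rpow_sub_one (abs_ne_zero.2 hyt)]
  rcases hyt.lt_or_gt with hneg | hpos
  · simp only [abs_of_neg hneg, neg_sub, sign_neg hneg, SignType.coe_neg, SignType.coe_one,
      neg_mul, one_mul]
    field_simp
    ring
  · simp only [abs_of_pos hpos, sign_pos hpos, SignType.coe_one, one_mul]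
    field_simp

lemma hasDerivAt_gaussJumpWeight {y : ℝ} (hy : y ≠ t) :
    HasDerivAt (gaussJumpWeight t γ A B)
      ((t - 2 * y + γ / (y - t)) * gaussJumpWeight t γ A B y) y := by
  have hpoly : HasDerivAt (fun x => -x ^ 2 + t * x) (t - 2 * y) y := by
    refine ((hasDerivAt_pow 2 y).fun_neg.fun_add ((hasDerivAt_id' y).const_mul t)).congr_deriv ?_
    simp only [Nat.cast_ofNat, pow_one, mul_one, Nat.add_one_sub_one]
    ring
  have hpow := hasDerivAt_abs_sub_rpow (γ := γ) hy
  have hjump : (fun x => A + B * (if 0 < x - t then (1 : ℝ) else 0)) =ᶠ[𝓝 y]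
      fun _ => A + B * (if 0 < y - t then (1 : ℝ) else 0) := by
    rcases hy.lt_or_gt with hlt | hgt
    · filter_upwards [Iio_mem_nhds hlt] with x hx
      rw [if_neg (by linarith [mem_Iio.1 hx]), if_neg (by linarith)]
    · filter_upwards [Ioi_mem_nhds hgt] with x hx
      rw [if_pos (by linarith [mem_Ioi.1 hx]), if_pos (by linarith)]
  refine ((hpoly.exp.fun_mul hpow).fun_mul
    ((hasDerivAt_const y _).congr_of_eventuallyEq hjump)).congr_deriv ?_
  simp only [gaussJumpWeight, mul_zero, add_zero]
  field_simp

lemma integrable_eval_mul_gaussJumpWeight (hγ : -1 < γ) (p : ℝ[X]) :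
    Integrable fun y => p.eval y * gaussJumpWeight t γ A B y :=
  integrable_eval_mul_of_abs_le_exp_mul_abs_rpow hγ
    measurable_gaussJumpWeight.aestronglyMeasurable abs_gaussJumpWeight_le p

lemma integrable_eval_mul_gaussJumpWeight_div (hγ : 0 < γ) (p : ℝ[X]) :
    Integrable fun y => p.eval y * gaussJumpWeight t γ A B y / (y - t) := by
  have hbound (y : ℝ) : |gaussJumpWeight t γ A B y / (y - t)| ≤
      (|A| + |B|) * (exp (-y ^ 2 + t * y) * |y - t| ^ (γ - 1)) := by
    rcases eq_or_ne y t with rfl | hy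
    · simp only [sub_self, div_zero, abs_zero]
      positivity
    · have hyt : |y - t| ≠ 0 := abs_ne_zero.2 (sub_ne_zero.2 hy)
      rw [abs_div, rpow_sub_one hyt, div_le_iff₀ (by positivity)]
      refine (abs_gaussJumpWeight_le y).trans_eq ?_
      field_simp
  simpa only [mul_div_assoc] using integrable_eval_mul_of_abs_le_exp_mul_abs_rpow
    (u := fun y => gaussJumpWeight t γ A B y / (y - t)) (by linarith)
    (measurable_gaussJumpWeight.div (measurable_id.sub_const t)).aestronglyMeasurable hbound p

lemma integral_derivative_add_mul_gaussJumpWeight (hγ : 0 < γ) (p : ℝ[X]) :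
    ∫ y, (derivative p + (C t - 2 * X) * p).eval y * gaussJumpWeight t γ A B y =
      -(γ * ∫ y, p.eval y * gaussJumpWeight t γ A B y / (y - t)) := by
  have hint := integrable_eval_mul_gaussJumpWeight (t := t) (A := A) (B := B) (by linarith)
  have hint' :=
    (integrable_eval_mul_gaussJumpWeight_div (t := t) (A := A) (B := B) hγ p).const_mul γ
  have hderiv (y : ℝ) (hy : y ≠ t) : HasDerivAt (fun y => p.eval y * gaussJumpWeight t γ A B y)
      ((derivative p + (C t - 2 * X) * p).eval y * gaussJumpWeight t γ A B y +
        γ * (p.eval y * gaussJumpWeight t γ A B y / (y - t))) y := by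
    refine ((p.hasDerivAt y).mul (hasDerivAt_gaussJumpWeight hy)).congr_deriv ?_
    simp only [eval_add, eval_mul, eval_sub, eval_C, eval_X, eval_ofNat]
    ring
  have hFTC := integral_eq_zero_of_hasDerivAt_of_ne
    (p.continuous.continuousAt.mul (continuousAt_gaussJumpWeight_self hγ)) hderiv
    ((hint _).add hint') (hint p)
  rw [integral_add (hint _) hint', integral_const_mul] at hFTC
  linarith

end GaussJumpWeight

structure IsMonicOrthogonal (w : ℝ → ℝ) (P : ℕ → ℝ[X]) : Prop where
  monic : ∀ n, (P n).Monic
  natDegree_eq : ∀ n, (P n).natDegree = n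
  integral_mul_eq_zero : ∀ m n, m ≠ n → ∫ y, (P m).eval y * (P n).eval y * w y = 0
  integrable : ∀ p : ℝ[X], Integrable fun y => p.eval y * w y

namespace IsMonicOrthogonal

variable {w : ℝ → ℝ} {P : ℕ → ℝ[X]} {h : ℕ → ℝ}

noncomputable def momentFunctional (hP : IsMonicOrthogonal w P) : ℝ[X] →ₗ[ℝ] ℝ where
  toFun p := ∫ y, p.eval y * w y
  map_add' p q := by
    simp only [eval_add, add_mul]
    exact integral_add (hP.integrable p) (hP.integrable q)
  map_smul' c p := by
    simp only [eval_smul, smul_eq_mul, mul_assoc, integral_const_mul, RingHom.id_apply]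

lemma momentFunctional_apply (hP : IsMonicOrthogonal w P) (p : ℝ[X]) :
    hP.momentFunctional p = ∫ y, p.eval y * w y :=
  rfl

lemma coeff_self (hP : IsMonicOrthogonal w P) (n : ℕ) : (P n).coeff n = 1 := by
  simpa [hP.natDegree_eq n] using (hP.monic n).coeff_natDegree

lemma momentFunctional_mul_ne (hP : IsMonicOrthogonal w P) {m n : ℕ} (hmn : m ≠ n) :
    hP.momentFunctional (P m * P n) = 0 := by
  simpa [hP.momentFunctional_apply] using hP.integral_mul_eq_zero m n hmn

lemma momentFunctional_mul_self (hP : IsMonicOrthogonal w P)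
    (hh : ∀ n, h n = ∫ y, (P n).eval y ^ 2 * w y) (n : ℕ) :
    hP.momentFunctional (P n * P n) = h n := by
  simp [hP.momentFunctional_apply, hh n, sq]

lemma degree_sub_C_coeff_mul_lt (hP : IsMonicOrthogonal w P) {q : ℝ[X]} {n : ℕ}
    (hq : q.natDegree ≤ n) : (q - C (q.coeff n) * P n).degree < n := by
  refine (degree_lt_iff_coeff_zero _ _).2 fun m hm => ?_
  rw [coeff_sub, coeff_C_mul]
  rcases hm.eq_or_lt with rfl | hlt
  · rw [hP.coeff_self, mul_one, sub_self]
  · have hPm : (P n).natDegree < m := by rwa [hP.natDegree_eq]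
    rw [coeff_eq_zero_of_natDegree_lt (hq.trans_lt hlt), coeff_eq_zero_of_natDegree_lt hPm,
      mul_zero, sub_zero]

lemma momentFunctional_mul_eq_zero_of_degree_lt (hP : IsMonicOrthogonal w P) {r : ℝ[X]}
    {n : ℕ} (hr : r.degree < n) : hP.momentFunctional (r * P n) = 0 := by
  suffices ∀ d : ℕ, ∀ r : ℝ[X], r.degree < d → d ≤ n → hP.momentFunctional (r * P n) = 0 from
    this n r hr le_rfl
  intro d
  induction d with
  | zero =>
    intro r hr _
    rw [show r = 0 from ext fun m => (degree_lt_iff_coeff_zero r 0).1 hr m m.zero_le,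
      zero_mul, map_zero]
  | succ d ih =>
    intro r hr hdn
    have hrd : r.natDegree ≤ d := natDegree_le_iff_coeff_eq_zero.2 fun m hm =>
      (degree_lt_iff_coeff_zero r (d + 1)).1 (by exact_mod_cast hr) m hm
    have hdecomp : r * P n = (r - C (r.coeff d) * P d) * P n + r.coeff d • (P d * P n) := by
      rw [smul_eq_C_mul]; ring
    rw [hdecomp, map_add, map_smul, ih _ (hP.degree_sub_C_coeff_mul_lt hrd) (by omega),
      hP.momentFunctional_mul_ne (by omega), smul_zero, add_zero]

lemma momentFunctional_mul_eq_coeff_mul (hP : IsMonicOrthogonal w P)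
    (hh : ∀ n, h n = ∫ y, (P n).eval y ^ 2 * w y) {q : ℝ[X]} {n : ℕ} (hq : q.natDegree ≤ n) :
    hP.momentFunctional (q * P n) = q.coeff n * h n := by
  have hdecomp : q * P n = (q - C (q.coeff n) * P n) * P n + q.coeff n • (P n * P n) := by
    rw [smul_eq_C_mul]; ring
  rw [hdecomp, map_add, map_smul, hP.momentFunctional_mul_eq_zero_of_degree_lt
    (hP.degree_sub_C_coeff_mul_lt hq), hP.momentFunctional_mul_self hh, zero_add, smul_eq_mul]

lemma eq_zero_of_momentFunctional_mul_eq_zero (hP : IsMonicOrthogonal w P)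
    (hh : ∀ n, h n = ∫ y, (P n).eval y ^ 2 * w y) (hhpos : ∀ n, 0 < h n) {Q : ℝ[X]}
    (hQ : hP.momentFunctional (Q * P Q.natDegree) = 0) : Q = 0 := by
  rw [hP.momentFunctional_mul_eq_coeff_mul hh le_rfl, ← leadingCoeff] at hQ
  exact leadingCoeff_eq_zero.1 ((mul_eq_zero.1 hQ).resolve_right (hhpos _).ne')

lemma natDegree_X_mul_sub_le (hP : IsMonicOrthogonal w P) (n : ℕ) :
    (X * P n - P (n + 1)).natDegree ≤ n := by
  have hX : (X * P n).natDegree ≤ n + 1 := by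
    rw [natDegree_X_mul (hP.monic n).ne_zero, hP.natDegree_eq]
  have hlt := hP.degree_sub_C_coeff_mul_lt hX
  rw [coeff_X_mul, hP.coeff_self, C_1, one_mul] at hlt
  exact natDegree_le_iff_coeff_eq_zero.2 fun m hm =>
    (degree_lt_iff_coeff_zero _ (n + 1)).1 (by exact_mod_cast hlt) m hm

lemma momentFunctional_X_mul_sub_mul_eq_zero (hP : IsMonicOrthogonal w P) {α β : ℕ → ℝ}
    (hh : ∀ n, h n = ∫ y, (P n).eval y ^ 2 * w y) (hhpos : ∀ n, 0 < h n)
    (hα : ∀ n, α n = (∫ y, y * (P n).eval y ^ 2 * w y) / h n)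
    (hβ : ∀ n, 1 ≤ n → β n = h n / h (n - 1)) (hβ0 : β 0 = 0) {n k : ℕ} (hk : k ≤ n) :
    hP.momentFunctional
      ((X * P n - P (n + 1) - C (α n) * P n - C (β n) * P (n - 1)) * P k) = 0 := by
  have hexpand : (X * P n - P (n + 1) - C (α n) * P n - C (β n) * P (n - 1)) * P k =
      X * P k * P n - P (n + 1) * P k - α n • (P n * P k) - β n • (P (n - 1) * P k) := by
    simp only [smul_eq_C_mul]; ring
  simp only [hexpand, map_sub, map_smul, smul_eq_mul]
  obtain rfl | rfl | hlt : k = n ∨ k + 1 = n ∨ k + 1 < n := by omega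
  · have hXk : hP.momentFunctional (X * P k * P k) = α k * h k := by
      rw [hα, div_mul_cancel₀ _ (hhpos k).ne', hP.momentFunctional_apply]
      simp only [eval_mul, eval_X, sq, mul_assoc]
    have hβk : β k * hP.momentFunctional (P (k - 1) * P k) = 0 := by
      rcases k with _ | k
      · rw [hβ0, zero_mul]
      · rw [hP.momentFunctional_mul_ne (by omega), mul_zero]
    rw [hXk, hβk, hP.momentFunctional_mul_ne (by omega), hP.momentFunctional_mul_self hh]
    ring
  · have hXk : hP.momentFunctional (X * P k * P (k + 1)) = h (k + 1) := by
      rw [hP.momentFunctional_mul_eq_coeff_mul hh, coeff_X_mul, hP.coeff_self, one_mul]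
      rw [natDegree_X_mul (hP.monic k).ne_zero, hP.natDegree_eq]
    rw [hXk, hP.momentFunctional_mul_ne (by omega), hP.momentFunctional_mul_ne (by omega),
      Nat.add_sub_cancel, hP.momentFunctional_mul_self hh, hβ (k + 1) (by omega),
      Nat.add_sub_cancel, div_mul_cancel₀ _ (hhpos k).ne']
    ring
  · have hXk : hP.momentFunctional (X * P k * P n) = 0 := by
      refine hP.momentFunctional_mul_eq_zero_of_degree_lt (degree_le_natDegree.trans_lt ?_)
      rw [natDegree_X_mul (hP.monic k).ne_zero, hP.natDegree_eq]
      exact_mod_cast hlt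
    rw [hXk, hP.momentFunctional_mul_ne (by omega), hP.momentFunctional_mul_ne (by omega),
      hP.momentFunctional_mul_ne (by omega)]
    ring

lemma X_mul_eq (hP : IsMonicOrthogonal w P) {α β : ℕ → ℝ}
    (hh : ∀ n, h n = ∫ y, (P n).eval y ^ 2 * w y) (hhpos : ∀ n, 0 < h n)
    (hα : ∀ n, α n = (∫ y, y * (P n).eval y ^ 2 * w y) / h n)
    (hβ : ∀ n, 1 ≤ n → β n = h n / h (n - 1)) (hβ0 : β 0 = 0) (n : ℕ) :
    X * P n = P (n + 1) + C (α n) * P n + C (β n) * P (n - 1) := by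
  have hC (a : ℝ) (k : ℕ) (hk : k ≤ n) : (C a * P k).natDegree ≤ n :=
    (natDegree_C_mul_le _ _).trans (by rwa [hP.natDegree_eq])
  have hdeg : (X * P n - P (n + 1) - C (α n) * P n - C (β n) * P (n - 1)).natDegree ≤ n := by
    rw [natDegree_sub_le_iff_left (hC _ _ (Nat.sub_le n 1)),
      natDegree_sub_le_iff_left (hC _ _ le_rfl)]
    exact hP.natDegree_X_mul_sub_le n
  linear_combination hP.eq_zero_of_momentFunctional_mul_eq_zero hh hhpos
    (hP.momentFunctional_X_mul_sub_mul_eq_zero hh hhpos hα hβ hβ0 hdeg)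

lemma div_mul_integral_succ_mul_div_sub_eq (hP : IsMonicOrthogonal w P) {β : ℕ → ℝ}
    {t γ : ℝ} (hh : ∀ n, h n = ∫ y, (P n).eval y ^ 2 * w y) (hhpos : ∀ n, 0 < h n)
    (hβ : ∀ n, 1 ≤ n → β n = h n / h (n - 1))
    (hpearson : ∀ p : ℝ[X], ∫ y, (derivative p + (C t - 2 * X) * p).eval y * w y =
      -(γ * ∫ y, p.eval y * w y / (y - t))) (k : ℕ) :
    γ / h k * ∫ y, (P (k + 1) * P k).eval y * w y / (y - t) = 2 * β (k + 1) - (k + 1) := by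
  have hsplit : derivative (P (k + 1) * P k) + (C t - 2 * X) * (P (k + 1) * P k) =
      derivative (P (k + 1)) * P k +
        (derivative (P k) + C t * P k - C 2 * (X * P k)) * P (k + 1) := by
    rw [derivative_mul, C_ofNat]; ring
  have hPk : (P k).natDegree ≤ k := (hP.natDegree_eq k).le
  have hdeg₁ : (derivative (P (k + 1))).natDegree ≤ k :=
    (natDegree_derivative_le _).trans (by rw [hP.natDegree_eq]; omega)
  have hdeg₂ : (derivative (P k) + C t * P k - C 2 * (X * P k)).natDegree ≤ k + 1 := by
    refine (natDegree_sub_le _ _).trans (max_le ((natDegree_add_le _ _).trans (max_le ?_ ?_)) ?_)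
    · exact (natDegree_derivative_le _).trans (by omega)
    · exact (natDegree_C_mul_le _ _).trans (by omega)
    · exact (natDegree_C_mul_le _ _).trans (natDegree_mul_le.trans (by simp; omega))
  have hibp := hpearson (P (k + 1) * P k)
  rw [← hP.momentFunctional_apply, hsplit, map_add,
    hP.momentFunctional_mul_eq_coeff_mul hh hdeg₁,
    hP.momentFunctional_mul_eq_coeff_mul hh hdeg₂] at hibp
  simp only [coeff_derivative, coeff_sub, coeff_add, coeff_C_mul, coeff_X_mul, hP.coeff_self,
    coeff_eq_zero_of_natDegree_lt (show (P k).natDegree < k + 1 + 1 by omega),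
    coeff_eq_zero_of_natDegree_lt (show (P k).natDegree < k + 1 by omega)] at hibp
  rw [hβ (k + 1) k.succ_pos, Nat.add_sub_cancel]
  field_simp [(hhpos k).ne']
  push_cast at hibp
  linarith

end IsMonicOrthogonal

noncomputable def weightedCauchy (w : ℝ → ℝ) (t : ℝ) (z : ℂ) (p : ℝ[X]) : ℂ :=
  ∫ y : ℝ, ((p.eval y * w y : ℝ) : ℂ) / ((z - y) * (y - t))

lemma integrable_ofReal_div_sub_mul_sub {f : ℝ → ℝ} {t : ℝ} {z : ℂ} (hz : z.im ≠ 0)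
    (hf : Integrable fun y => f y / (y - t)) :
    Integrable fun y : ℝ => (f y : ℂ) / ((z - y) * (y - t)) := by
  have hbound (y : ℝ) : ‖(z - y)⁻¹‖ ≤ |z.im|⁻¹ := by
    rw [norm_inv]
    refine inv_anti₀ (abs_pos.2 hz) ?_
    simpa using Complex.abs_im_le_norm (z - y)
  refine (Integrable.mul_bdd (f := fun y => ((f y / (y - t) : ℝ) : ℂ)) hf.ofReal (by fun_prop)
    (.of_forall hbound)).congr (.of_forall fun y => ?_)
  push_cast
  simp only [div_eq_mul_inv, mul_inv]
  ring

-- At `y = t` every integrand is `0` (as `x / 0 = 0`), so nothing is assumed about `w t`.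
lemma sub_mul_weightedCauchy {w : ℝ → ℝ} {t : ℝ} {z : ℂ} (hz : z.im ≠ 0)
    (hI : ∀ p : ℝ[X], Integrable fun y => p.eval y * w y / (y - t)) {a b : ℝ}
    {p₀ p₁ p₂ : ℝ[X]} (hrec : X * p₁ = p₂ + C a * p₁ + C b * p₀) (q : ℝ[X]) :
    (z - a) * weightedCauchy w t z (q * p₁) =
      ((∫ y, (q * p₁).eval y * w y / (y - t) : ℝ) : ℂ) + weightedCauchy w t z (q * p₂) +
        b * weightedCauchy w t z (q * p₀) := by
  have hJ (r : ℝ[X]) := integrable_ofReal_div_sub_mul_sub hz (hI r)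
  have hIc : Integrable fun y => (((q * p₁).eval y * w y / (y - t) : ℝ) : ℂ) := (hI _).ofReal
  simp only [weightedCauchy]
  rw [← integral_const_mul, ← integral_complex_ofReal, ← integral_add hIc (hJ _),
    ← integral_const_mul, ← integral_add (hIc.fun_add (hJ _)) ((hJ _).const_mul _)]
  congr 1
  ext y
  have hy : ((y : ℂ) - a) * ((p₁.eval y : ℝ) : ℂ) =
      ((p₂.eval y : ℝ) : ℂ) + b * ((p₀.eval y : ℝ) : ℂ) := by
    have := congrArg (fun r => ((r.eval y : ℝ) : ℂ)) hrec
    simp only [eval_mul, eval_add, eval_X, eval_C, Complex.ofReal_mul, Complex.ofReal_add] at this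
    linear_combination this
  rcases eq_or_ne y t with rfl | hyt
  · simp
  have hyt' : (y : ℂ) - t ≠ 0 := by exact_mod_cast sub_ne_zero.2 hyt
  have hzy : z - y ≠ 0 := fun h0 => hz (by simpa using congrArg Complex.im h0)
  simp only [eval_mul]
  push_cast
  field_simp
  linear_combination ((q.eval y : ℝ) : ℂ) * (w y : ℂ) * hy

theorem compatibility_S2_general
    (t γ A B : ℝ) (hγ : 0 < γ)
    (w : ℝ → ℝ)
    (hw : ∀ y : ℝ, w y =
      Real.exp (-y ^ 2 + t * y) * |y - t| ^ γ *
        (A + B * (if 0 < y - t then (1 : ℝ) else 0)))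
    (P : ℕ → Polynomial ℝ)
    (hmonic : ∀ n, (P n).Monic)
    (hdeg : ∀ n, (P n).natDegree = n)
    (horth : ∀ m n, m ≠ n →
      ∫ y : ℝ, (P m).eval y * (P n).eval y * w y = 0)
    (h : ℕ → ℝ)
    (hh : ∀ n, h n = ∫ y : ℝ, ((P n).eval y) ^ 2 * w y)
    (hhpos : ∀ n, 0 < h n)
    (β : ℕ → ℝ)
    (hβ : ∀ n, 1 ≤ n → β n = h n / h (n - 1))
    (An Bn : ℕ → ℂ → ℂ)
    (hAn : ∀ n, ∀ z : ℂ, z.im ≠ 0 → An n z =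
      2 + (↑(γ / h n) : ℂ) *
        ∫ y : ℝ, (↑(((P n).eval y) ^ 2 * w y) : ℂ) /
          ((z - (y : ℂ)) * ((y : ℂ) - (t : ℂ))))
    (hBn : ∀ n, 1 ≤ n → ∀ z : ℂ, z.im ≠ 0 → Bn n z =
      (↑(γ / h (n - 1)) : ℂ) *
        ∫ y : ℝ, (↑((P n).eval y * (P (n - 1)).eval y * w y) : ℂ) /
          ((z - (y : ℂ)) * ((y : ℂ) - (t : ℂ))))
    (hB0 : ∀ z : ℂ, Bn 0 z = 0)
    (α : ℕ → ℝ)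
    (hα : ∀ n, α n = (∫ y : ℝ, y * ((P n).eval y) ^ 2 * w y) / h n)
    (hβ0 : β 0 = 0) :
    ∀ n : ℕ, ∀ z : ℂ, z.im ≠ 0 →
      1 + (z - (α n : ℂ)) * (Bn (n + 1) z - Bn n z) =
        (β (n + 1) : ℂ) * An (n + 1) z - (β n : ℂ) * An (n - 1) z := by
  obtain rfl : w = gaussJumpWeight t γ A B := funext hw
  have hP : IsMonicOrthogonal (gaussJumpWeight t γ A B) P :=
    ⟨hmonic, hdeg, horth, integrable_eval_mul_gaussJumpWeight (by linarith)⟩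
  have hr (k : ℕ) : ((γ / h k : ℝ) : ℂ) *
      ((∫ y, (P (k + 1) * P k).eval y * gaussJumpWeight t γ A B y / (y - t) : ℝ) : ℂ) =
        2 * β (k + 1) - (k + 1) := by
    exact_mod_cast hP.div_mul_integral_succ_mul_div_sub_eq hh hhpos hβ
      (integral_derivative_add_mul_gaussJumpWeight hγ) k
  have hc (k : ℕ) : (β (k + 1) : ℂ) * ((γ / h (k + 1) : ℝ) : ℂ) = ((γ / h k : ℝ) : ℂ) := by
    have hβh : β (k + 1) * (γ / h (k + 1)) = γ / h k := by
      rw [hβ (k + 1) k.succ_pos, Nat.add_sub_cancel]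
      field_simp [(hhpos k).ne', (hhpos (k + 1)).ne']
    exact_mod_cast hβh
  intro n z hz
  have hJ := sub_mul_weightedCauchy hz
    (integrable_eval_mul_gaussJumpWeight_div (t := t) (A := A) (B := B) hγ)
    (hP.X_mul_eq hh hhpos hα hβ hβ0 n)
  set J := weightedCauchy (gaussJumpWeight t γ A B) t z
  have hA' (k : ℕ) : An k z = 2 + ((γ / h k : ℝ) : ℂ) * J (P k * P k) := by
    simp [hAn k z hz, J, weightedCauchy, sq]
  have hB' (k : ℕ) : Bn (k + 1) z = ((γ / h k : ℝ) : ℂ) * J (P (k + 1) * P k) := by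
    simp [hBn _ k.succ_pos z hz, J, weightedCauchy]
  rcases n with _ | m
  · have e := hJ (P 1)
    rw [hβ0, Complex.ofReal_zero] at e
    rw [hB0, hB', hA', hβ0, Complex.ofReal_zero]
    linear_combination ((γ / h 0 : ℝ) : ℂ) * e + hr 0 - J (P 1 * P 1) * hc 0
  · have e₁ := hJ (P (m + 2))
    have e₂ := hJ (P m)
    rw [mul_comm (P m) (P (m + 1)), mul_comm (P m) (P (m + 1 + 1))] at e₂
    have hr₁ := hr (m + 1)
    rw [Nat.cast_succ] at hr₁
    rw [hB', hB', hA', hA']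
    simp only [Nat.add_sub_cancel] at e₁ e₂ ⊢
    linear_combination ((γ / h (m + 1) : ℝ) : ℂ) * e₁ - ((γ / h m : ℝ) : ℂ) * e₂ + hr₁ -
      hr m + J (P (m + 2) * P m) * hc m - J (P (m + 2) * P (m + 2)) * hc (m + 1)

/-- Compatibility condition (S2): for every n >= 0 and every z with nonzero
imaginary part, 1 + (z - alpha_n)(B_{n+1}(z) - B_n(z)) =
beta_{n+1} A_{n+1}(z) - beta_n A_{n-1}(z), with the conventions B_0(z) = 0 and
beta_0 A_{-1}(z) = 0 when n = 0 (here beta_0 = 0 and n - 1 is truncated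
subtraction, so the last term vanishes for n = 0). -/
theorem compatibility_S2
    (t γ A B : ℝ) (hγ : 0 < γ) (hA : 0 ≤ A) (hAB : 0 ≤ A + B)
    (hABpos : 0 < A ∨ 0 < A + B)
    (w : ℝ → ℝ)
    (hw : ∀ y : ℝ, w y =
      Real.exp (-y ^ 2 + t * y) * |y - t| ^ γ *
        (A + B * (if 0 < y - t then (1 : ℝ) else 0)))
    (P : ℕ → Polynomial ℝ)
    (hmonic : ∀ n, (P n).Monic)
    (hdeg : ∀ n, (P n).natDegree = n)
    (horth : ∀ m n, m ≠ n →
      ∫ y : ℝ, (P m).eval y * (P n).eval y * w y = 0)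
    (h : ℕ → ℝ)
    (hh : ∀ n, h n = ∫ y : ℝ, ((P n).eval y) ^ 2 * w y)
    (hhpos : ∀ n, 0 < h n)
    (β : ℕ → ℝ)
    (hβ : ∀ n, 1 ≤ n → β n = h n / h (n - 1))
    (An Bn : ℕ → ℂ → ℂ)
    (hAn : ∀ n, ∀ z : ℂ, z.im ≠ 0 → An n z =
      2 + (↑(γ / h n) : ℂ) *
        ∫ y : ℝ, (↑(((P n).eval y) ^ 2 * w y) : ℂ) /
          ((z - (y : ℂ)) * ((y : ℂ) - (t : ℂ))))
    (hBn : ∀ n, 1 ≤ n → ∀ z : ℂ, z.im ≠ 0 → Bn n z =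
      (↑(γ / h (n - 1)) : ℂ) *
        ∫ y : ℝ, (↑((P n).eval y * (P (n - 1)).eval y * w y) : ℂ) /
          ((z - (y : ℂ)) * ((y : ℂ) - (t : ℂ))))
    (hB0 : ∀ z : ℂ, Bn 0 z = 0)
    (α : ℕ → ℝ)
    (hα : ∀ n, α n = (∫ y : ℝ, y * ((P n).eval y) ^ 2 * w y) / h n)
    (hβ0 : β 0 = 0) :
    ∀ n : ℕ, ∀ z : ℂ, z.im ≠ 0 →
      1 + (z - (α n : ℂ)) * (Bn (n + 1) z - Bn n z) =
        (β (n + 1) : ℂ) * An (n + 1) z - (β n : ℂ) * An (n - 1) z :=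
  compatibility_S2_general t γ A B hγ w hw P hmonic hdeg horth h hh hhpos β hβ An Bn hAn hBn hB0 α
    hα hβ0
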